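/- arXiv:2508.19064 — 6 statements merged into one kernel-verified Lean document; each statement's English description precedes it below -/
import Mathlib

section
/- Let μ be a finite Borel measure on ℝ, A > 0, B ∈ ℝ, and define κ(z) = A·z + B + ∫_ℝ (1 + zν)/(ν − z) dμ(ν) for z in the open upper half-plane ℍ⁺ = {z ∈ ℂ : Im z > 0} (the integrand is bounded in ν for each such z). Then κ is holomorphic on ℍ⁺, and for every z ∈ ℍ⁺ its derivative satisfies Re κ'(z) = A + ∫_ℝ (1+ν²)·((ν − Re z)² − (Im z)²)/|ν − z|⁴ dμ(ν). -/
open MeasureTheory Complex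

/-!
Differentiate under the integral sign. The `z`-derivative of the kernel `(1 + zν)/(ν - z)` is
`(1 + ν²)/(ν - z)²`, and expanding `1 + ν²` around `ν = z` shows that it is bounded in `ν`,
uniformly for `z` in a neighbourhood of any point of `ℍ⁺`; since `μ` is finite, dominated
differentiation applies. The formula for `Re κ'` is then the real part of
`(1 + ν²)/(ν - z)² = (1 + ν²) · conj (ν - z)² / |ν - z|⁴`, integrated.
-/

lemma im_le_norm_ofReal_sub (ν : ℝ) (w : ℂ) : w.im ≤ ‖(ν : ℂ) - w‖ := by
  calc w.im ≤ |((ν : ℂ) - w).im| := by simp [le_abs_self]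
    _ ≤ ‖(ν : ℂ) - w‖ := abs_im_le_norm _

lemma ofReal_sub_ne_zero_of_im_pos {w : ℂ} (hw : 0 < w.im) (ν : ℝ) : (ν : ℂ) - w ≠ 0 :=
  norm_pos_iff.mp (hw.trans_le (im_le_norm_ofReal_sub ν w))

lemma hasDerivAt_herglotzKernel {w : ℂ} (hw : 0 < w.im) (ν : ℝ) :
    HasDerivAt (fun u : ℂ => (1 + u * ν) / ((ν : ℂ) - u))
      ((1 + (ν : ℂ) ^ 2) / ((ν : ℂ) - w) ^ 2) w := by
  have hnum : HasDerivAt (fun u : ℂ => 1 + u * ν) (ν : ℂ) w := by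
    simpa using ((hasDerivAt_id w).mul_const (ν : ℂ)).const_add 1
  have hden : HasDerivAt (fun u : ℂ => (ν : ℂ) - u) (-1) w := by
    simpa using (hasDerivAt_id w).const_sub (ν : ℂ)
  refine (hnum.fun_div hden (ofReal_sub_ne_zero_of_im_pos hw ν)).congr_deriv ?_
  ring

lemma norm_one_add_sq_le {w : ℂ} {R : ℝ} (hR : ‖w‖ ≤ R) : ‖1 + w ^ 2‖ ≤ 1 + R ^ 2 := by
  calc ‖1 + w ^ 2‖ ≤ 1 + ‖w‖ ^ 2 := (norm_add_le _ _).trans_eq (by rw [norm_one, norm_pow])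
    _ ≤ 1 + R ^ 2 := by gcongr

section Bounds

variable {w : ℂ} {δ R : ℝ} (hδ : 0 < δ) (hw : δ ≤ w.im) (hR : ‖w‖ ≤ R) (ν : ℝ)
include hδ hw hR

/-- Writing `1 + wν = (1 + w²) + w (ν - w)` makes the bound independent of `ν`. -/
lemma norm_herglotzKernel_le :
    ‖(1 + w * ν) / ((ν : ℂ) - w)‖ ≤ (1 + R ^ 2) / δ + R := by
  have hne := ofReal_sub_ne_zero_of_im_pos (hδ.trans_le hw) ν
  have hdist : δ ≤ ‖(ν : ℂ) - w‖ := hw.trans (im_le_norm_ofReal_sub ν w)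
  have hsplit : (1 + w * ν) / ((ν : ℂ) - w) = (1 + w ^ 2) / ((ν : ℂ) - w) + w := by
    field_simp; ring
  calc ‖(1 + w * ν) / ((ν : ℂ) - w)‖ ≤ ‖1 + w ^ 2‖ / ‖(ν : ℂ) - w‖ + ‖w‖ := by
        rw [hsplit, ← norm_div]; exact norm_add_le _ _
    _ ≤ (1 + R ^ 2) / δ + R := by gcongr; exact norm_one_add_sq_le hR

/-- Writing `1 + ν² = (1 + w²) + 2w (ν - w) + (ν - w)²` makes the bound independent of `ν`. -/
lemma norm_herglotzKernel_deriv_le :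
    ‖(1 + (ν : ℂ) ^ 2) / ((ν : ℂ) - w) ^ 2‖ ≤ (1 + R ^ 2) / δ ^ 2 + 2 * R / δ + 1 := by
  have hne := ofReal_sub_ne_zero_of_im_pos (hδ.trans_le hw) ν
  have hdist : δ ≤ ‖(ν : ℂ) - w‖ := hw.trans (im_le_norm_ofReal_sub ν w)
  have hsplit : (1 + (ν : ℂ) ^ 2) / ((ν : ℂ) - w) ^ 2
      = (1 + w ^ 2) / ((ν : ℂ) - w) ^ 2 + 2 * w / ((ν : ℂ) - w) + 1 := by
    field_simp; ring
  calc ‖(1 + (ν : ℂ) ^ 2) / ((ν : ℂ) - w) ^ 2‖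
        ≤ ‖1 + w ^ 2‖ / ‖(ν : ℂ) - w‖ ^ 2 + 2 * ‖w‖ / ‖(ν : ℂ) - w‖ + 1 := by
        rw [hsplit]
        refine (norm_add_le _ _).trans ?_
        refine add_le_add ((norm_add_le _ _).trans_eq ?_) norm_one.le
        rw [norm_div, norm_div, norm_mul, norm_pow, Complex.norm_two]
    _ ≤ (1 + R ^ 2) / δ ^ 2 + 2 * R / δ + 1 := by
        have : 0 ≤ R := (norm_nonneg w).trans hR
        gcongr; exact norm_one_add_sq_le hR

end Bounds

lemma continuous_herglotzKernel {w : ℂ} (hw : 0 < w.im) :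
    Continuous fun ν : ℝ => (1 + w * ν) / ((ν : ℂ) - w) := by
  have := ofReal_sub_ne_zero_of_im_pos hw
  fun_prop (disch := assumption)

lemma continuous_herglotzKernel_deriv {w : ℂ} (hw : 0 < w.im) :
    Continuous fun ν : ℝ => (1 + (ν : ℂ) ^ 2) / ((ν : ℂ) - w) ^ 2 := by
  have := fun ν => pow_ne_zero 2 (ofReal_sub_ne_zero_of_im_pos hw ν)
  fun_prop (disch := assumption)

lemma hasDerivAt_integral_herglotzKernel (μ : Measure ℝ) [IsFiniteMeasure μ] {z : ℂ}
    (hz : 0 < z.im) :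
    Integrable (fun ν : ℝ => (1 + (ν : ℂ) ^ 2) / ((ν : ℂ) - z) ^ 2) μ ∧
    HasDerivAt (fun w => ∫ ν : ℝ, (1 + w * ν) / ((ν : ℂ) - w) ∂μ)
      (∫ ν : ℝ, (1 + (ν : ℂ) ^ 2) / ((ν : ℂ) - z) ^ 2 ∂μ) z := by
  have hδ : 0 < z.im / 2 := half_pos hz
  set U := {w : ℂ | z.im / 2 < w.im ∧ ‖w‖ < ‖z‖ + 1}
  have hU : U ∈ nhds z :=
    ((isOpen_lt continuous_const continuous_im).inter
      (isOpen_lt continuous_norm continuous_const)).mem_nhds ⟨half_lt_self hz, lt_add_one ‖z‖⟩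
  have hU_im : ∀ w ∈ U, 0 < w.im := fun w hw => hδ.trans hw.1
  refine hasDerivAt_integral_of_dominated_loc_of_deriv_le hU
    (Filter.eventually_of_mem hU fun w hw =>
      (continuous_herglotzKernel (hU_im w hw)).aestronglyMeasurable)
    (Integrable.of_bound (continuous_herglotzKernel hz).aestronglyMeasurable _
      (Filter.Eventually.of_forall (norm_herglotzKernel_le hz le_rfl le_rfl)))
    (continuous_herglotzKernel_deriv hz).aestronglyMeasurable
    (Filter.Eventually.of_forall fun ν w hw =>
      norm_herglotzKernel_deriv_le hδ hw.1.le hw.2.le ν)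
    (integrable_const _)
    (Filter.Eventually.of_forall fun ν w hw => hasDerivAt_herglotzKernel (hU_im w hw) ν)

lemma re_herglotzKernel_deriv (z : ℂ) (ν : ℝ) :
    ((1 + (ν : ℂ) ^ 2) / ((ν : ℂ) - z) ^ 2).re
      = (1 + ν ^ 2) * ((ν - z.re) ^ 2 - z.im ^ 2) / ‖(ν : ℂ) - z‖ ^ 4 := by
  have hnum : (1 + (ν : ℂ) ^ 2) = ((1 + ν ^ 2 : ℝ) : ℂ) := by push_cast; ring
  have hre : (((ν : ℂ) - z) ^ 2).re = (ν - z.re) ^ 2 - z.im ^ 2 := by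
    simp only [sq, mul_re, sub_re, sub_im, ofReal_re, ofReal_im]; ring
  rw [hnum, div_eq_mul_inv, re_ofReal_mul, inv_re, hre, map_pow, ← Complex.sq_norm, ← pow_mul]
  ring

theorem stmt3_general (μ : Measure ℝ) [IsFiniteMeasure μ] (A B : ℝ)
    (κ : ℂ → ℂ)
    (hκ : ∀ z : ℂ, 0 < z.im →
      κ z = A * z + B + ∫ ν : ℝ, (1 + z * (ν : ℂ)) / ((ν : ℂ) - z) ∂μ) :
    DifferentiableOn ℂ κ {z : ℂ | 0 < z.im} ∧
    ∀ z : ℂ, 0 < z.im →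
      (deriv κ z).re
        = A + ∫ ν : ℝ, (1 + ν ^ 2) * ((ν - z.re) ^ 2 - z.im ^ 2) /
            ‖(ν : ℂ) - z‖ ^ 4 ∂μ := by
  have hderiv : ∀ z : ℂ, 0 < z.im →
      HasDerivAt κ (A + ∫ ν : ℝ, (1 + (ν : ℂ) ^ 2) / ((ν : ℂ) - z) ^ 2 ∂μ) z := by
    intro z hz
    have hlin : HasDerivAt (fun w : ℂ => A * w + B) (A : ℂ) z := by
      simpa using ((hasDerivAt_id z).const_mul (A : ℂ)).add_const (B : ℂ)
    refine (hlin.add (hasDerivAt_integral_herglotzKernel μ hz).2).congr_of_eventuallyEq ?_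
    filter_upwards [(isOpen_lt continuous_const continuous_im).mem_nhds hz] with w hw
    exact hκ w hw
  refine ⟨fun z hz => (hderiv z hz).differentiableAt.differentiableWithinAt, fun z hz => ?_⟩
  rw [(hderiv z hz).deriv, add_re, ofReal_re,
    ← RCLike.re_to_complex, ← integral_re (hasDerivAt_integral_herglotzKernel μ hz).1]
  simp only [RCLike.re_to_complex, re_herglotzKernel_deriv z]

theorem stmt3 (μ : Measure ℝ) [IsFiniteMeasure μ] (A B : ℝ) (hA : 0 < A)
    (κ : ℂ → ℂ)
    (hκ : ∀ z : ℂ, 0 < z.im →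
      κ z = A * z + B + ∫ ν : ℝ, (1 + z * (ν : ℂ)) / ((ν : ℂ) - z) ∂μ) :
    DifferentiableOn ℂ κ {z : ℂ | 0 < z.im} ∧
    ∀ z : ℂ, 0 < z.im →
      (deriv κ z).re
        = A + ∫ ν : ℝ, (1 + ν ^ 2) * ((ν - z.re) ^ 2 - z.im ^ 2) /
            ‖(ν : ℂ) - z‖ ^ 4 ∂μ :=
  stmt3_general μ A B κ hκ
end

section
/- Let κ : ℂ → ℂ be continuous on the closed upper half-plane {z : Im z ≥ 0}, holomorphic on ℍ⁺ = {z : Im z > 0}, satisfy Im κ(z) ≥ 0 for all z with Im z ≥ 0, and be non-constant on ℍ⁺. Let f : ℝ → ℂ be integrable with f(t) = 0 for almost every t < 0. If ∫_ℝ f(t)·e^{i κ(ω) t} dt = 0 for every ω ∈ ℝ (the integral is absolutely convergent since |e^{iκ(ω)t}| ≤ 1 on the support of f), then f = 0 almost everywhere. -/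
open MeasureTheory Complex

/-!
For causal integrable `f`, the Fourier–Laplace transform `F z = ∫ f t * exp (I * z * t)` is bounded
by `‖f‖₁` and holomorphic on the upper half-plane `ℍ⁺`, and continuous up to the real axis. By the
open mapping theorem a non-constant `κ` with `Im κ ≥ 0` maps `ℍ⁺` into itself, so `F ∘ κ` is bounded
and holomorphic on `ℍ⁺`; it vanishes on the real axis, hence on all of `ℍ⁺` by Phragmén–Lindelöf.
So `F` vanishes on the open set `κ '' ℍ⁺`, hence on `ℍ⁺` by the identity theorem and on the real
axis by continuity. There `F` is the Fourier transform of `f`, which is injective on `L¹`.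
-/

open Filter Set
open scoped FourierTransform Real SchwartzMap

theorem MeasureTheory.Integrable.ae_eq_zero_of_fourier_eq_zero {V E : Type*}
    [NormedAddCommGroup V] [InnerProductSpace ℝ V] [FiniteDimensional ℝ V]
    [MeasurableSpace V] [BorelSpace V]
    [NormedAddCommGroup E] [NormedSpace ℂ E] [CompleteSpace E]
    {f : V → E} (hf : Integrable f) (h : 𝓕 f = 0) : f =ᵐ[volume] 0 := by
  refine ae_eq_zero_of_integral_contDiff_smul_eq_zero hf.locallyIntegrable fun g hg hgc => ?_
  let G : 𝓢(V, ℂ) := (hgc.comp_left ofReal_zero).toSchwartzMap (ofRealCLM.contDiff.comp hg)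
  calc ∫ x, g x • f x = ∫ x, 𝓕 ((𝓕⁻ G : 𝓢(V, ℂ)) : V → ℂ) x • f x := by
        rw [← SchwartzMap.fourier_coe, FourierTransform.fourier_fourierInv_eq]
        rfl
    _ = ∫ ξ, (𝓕⁻ G) ξ • 𝓕 f ξ := by
        simpa using! VectorFourier.integral_fourierIntegral_smul_eq_flip (L := innerₗ V)
          (μ := volume) (ν := volume)
          Real.continuous_fourierChar continuous_inner (𝓕⁻ G).integrable hf
    _ = 0 := by simp [h]

noncomputable def fourierLaplace (f : ℝ → ℂ) (z : ℂ) : ℂ :=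
  ∫ t : ℝ, f t * cexp (I * z * t)

theorem norm_cexp_I_mul_mul_ofReal (z : ℂ) (t : ℝ) :
    ‖cexp (I * z * t)‖ = Real.exp (-(z.im * t)) := by
  simp [norm_exp, mul_re, mul_im]

section fourierLaplace

variable {f : ℝ → ℂ}

theorem ae_norm_mul_cexp_le (hcausal : ∀ᵐ t : ℝ, t < 0 → f t = 0) {z : ℂ} (hz : 0 ≤ z.im) :
    ∀ᵐ t : ℝ, ‖f t * cexp (I * z * t)‖ ≤ ‖f t‖ := by
  filter_upwards [hcausal] with t ht
  rcases lt_or_ge t 0 with htneg | htnonneg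
  · simp [ht htneg]
  · rw [norm_mul, norm_cexp_I_mul_mul_ofReal]
    exact mul_le_of_le_one_right (norm_nonneg _)
      (Real.exp_le_one_iff.2 (neg_nonpos.2 (mul_nonneg hz htnonneg)))

theorem aestronglyMeasurable_mul_cexp (hf : Integrable f) (z : ℂ) :
    AEStronglyMeasurable (fun t : ℝ => f t * cexp (I * z * t)) :=
  hf.1.mul (Continuous.aestronglyMeasurable (by fun_prop))

theorem integrable_mul_cexp (hf : Integrable f) (hcausal : ∀ᵐ t : ℝ, t < 0 → f t = 0) {z : ℂ}
    (hz : 0 ≤ z.im) : Integrable (fun t : ℝ => f t * cexp (I * z * t)) :=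
  hf.norm.mono' (aestronglyMeasurable_mul_cexp hf z) (ae_norm_mul_cexp_le hcausal hz)

theorem norm_fourierLaplace_le (hf : Integrable f) (hcausal : ∀ᵐ t : ℝ, t < 0 → f t = 0) {z : ℂ}
    (hz : 0 ≤ z.im) : ‖fourierLaplace f z‖ ≤ ∫ t, ‖f t‖ :=
  (norm_integral_le_integral_norm _).trans <|
    integral_mono_ae (integrable_mul_cexp hf hcausal hz).norm hf.norm
      (ae_norm_mul_cexp_le hcausal hz)

theorem continuousOn_fourierLaplace (hf : Integrable f) (hcausal : ∀ᵐ t : ℝ, t < 0 → f t = 0) :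
    ContinuousOn (fourierLaplace f) {z : ℂ | 0 ≤ z.im} :=
  continuousOn_of_dominated (fun z _ => aestronglyMeasurable_mul_cexp hf z)
    (fun _ hz => ae_norm_mul_cexp_le hcausal hz) hf.norm
    (ae_of_all _ fun _ => Continuous.continuousOn (by fun_prop))

theorem differentiableOn_fourierLaplace (hf : Integrable f) (hcausal : ∀ᵐ t : ℝ, t < 0 → f t = 0) :
    DifferentiableOn ℂ (fourierLaplace f) {z : ℂ | 0 < z.im} := by
  intro z₀ hz₀
  set ε := z₀.im / 2 with hε_def
  have hε : 0 < ε := half_pos hz₀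
  have him_ge : ∀ z ∈ Metric.ball z₀ ε, ε ≤ z.im := fun z hz => by
    have := (abs_im_le_norm (z - z₀)).trans_lt (mem_ball_iff_norm.1 hz)
    rw [sub_im, abs_lt] at this
    linarith
  have hbound : ∀ᵐ t : ℝ, ∀ z ∈ Metric.ball z₀ ε,
      ‖f t * (I * t * cexp (I * z * t))‖ ≤ ε⁻¹ * ‖f t‖ := by
    filter_upwards [hcausal] with t ht z hz
    rcases lt_or_ge t 0 with htneg | htnonneg
    · simp [ht htneg]
    have hdecay : t * Real.exp (-(z.im * t)) ≤ ε⁻¹ := calc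
      t * Real.exp (-(z.im * t)) ≤ t * Real.exp (-(ε * t)) := by
        gcongr
        nlinarith [him_ge z hz]
      _ = ε⁻¹ * (ε * t * Real.exp (-(ε * t))) := by field_simp
      _ ≤ ε⁻¹ * 1 := by
        gcongr
        exact (Real.mul_exp_neg_le_exp_neg_one _).trans (Real.exp_le_one_iff.2 (by norm_num))
      _ = ε⁻¹ := mul_one _
    rw [norm_mul, norm_mul, norm_mul, norm_I, one_mul, norm_real, Real.norm_of_nonneg htnonneg,
      norm_cexp_I_mul_mul_ofReal, mul_comm ε⁻¹]
    exact mul_le_mul_of_nonneg_left hdecay (norm_nonneg _)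
  have hderiv : ∀ t : ℝ, ∀ z ∈ Metric.ball z₀ ε,
      HasDerivAt (fun z => f t * cexp (I * z * t)) (f t * (I * t * cexp (I * z * t))) z :=
    fun t z _ => by
      simpa [mul_comm, mul_left_comm, mul_assoc] using
        (((hasDerivAt_id z).const_mul I).mul_const (t : ℂ)).cexp.const_mul (f t)
  exact (hasDerivAt_integral_of_dominated_loc_of_deriv_le (Metric.ball_mem_nhds z₀ hε)
    (.of_forall (aestronglyMeasurable_mul_cexp hf)) (integrable_mul_cexp hf hcausal hz₀.le)
    (hf.1.mul (Continuous.aestronglyMeasurable (by fun_prop))) hbound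
    (hf.norm.const_mul ε⁻¹) (.of_forall hderiv)).2.differentiableAt.differentiableWithinAt

theorem diffContOnCl_fourierLaplace (hf : Integrable f) (hcausal : ∀ᵐ t : ℝ, t < 0 → f t = 0) :
    DiffContOnCl ℂ (fourierLaplace f) {z : ℂ | 0 < z.im} :=
  ⟨differentiableOn_fourierLaplace hf hcausal, by
    simpa only [closure_setOfPred_lt_im] using continuousOn_fourierLaplace hf hcausal⟩

theorem fourier_eq_fourierLaplace (f : ℝ → ℂ) (w : ℝ) : 𝓕 f w = fourierLaplace f (-2 * π * w) := by
  rw [Real.fourier_real_eq_integral_exp_smul, fourierLaplace]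
  congr 1 with t
  rw [smul_eq_mul, mul_comm]
  push_cast
  ring_nf

end fourierLaplace

theorem DifferentiableOn.isOpen_image_of_ne {κ : ℂ → ℂ} {U : Set ℂ} (hκ : DifferentiableOn ℂ κ U)
    (hU : IsOpen U) (hUc : IsPreconnected U) {z w : ℂ} (hz : z ∈ U) (hw : w ∈ U)
    (hne : κ z ≠ κ w) : IsOpen (κ '' U) := by
  rcases (hκ.analyticOnNhd hU).is_constant_or_isOpen hUc with ⟨c, hc⟩ | hopen
  · exact absurd ((hc z hz).trans (hc w hw).symm) hne
  · exact hopen U subset_rfl hU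

theorem mapsTo_im_pos_of_isOpen_image {κ : ℂ → ℂ} (hopen : IsOpen (κ '' {z : ℂ | 0 < z.im}))
    (him : ∀ z : ℂ, 0 < z.im → 0 ≤ (κ z).im) :
    MapsTo κ {z : ℂ | 0 < z.im} {z : ℂ | 0 < z.im} := by
  intro z hz
  rw [← interior_setOfPred_le_im]
  have hsub : κ '' {z : ℂ | 0 < z.im} ⊆ {z : ℂ | 0 ≤ z.im} := image_subset_iff.2 him
  exact interior_maximal hsub hopen (mem_image_of_mem κ hz)

namespace PhragmenLindelof

variable {E : Type*} [NormedAddCommGroup E] [NormedSpace ℂ E] {g : ℂ → E}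

theorem upper_half_plane_of_bounded (hd : DiffContOnCl ℂ g {z : ℂ | 0 < z.im})
    (hB : ∃ B, ∀ z : ℂ, 0 < z.im → ‖g z‖ ≤ B) {C : ℝ} (hreal : ∀ x : ℝ, ‖g x‖ ≤ C) {z : ℂ}
    (hz : 0 ≤ z.im) : ‖g z‖ ≤ C := by
  obtain ⟨B, hB⟩ := hB
  have hrot : MapsTo (I * ·) {z : ℂ | 0 < z.re} {z : ℂ | 0 < z.im} := fun z hz => by
    simpa using hz
  have hd' : DiffContOnCl ℂ (fun z => g (I * z)) {z : ℂ | 0 < z.re} :=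
    hd.comp (differentiable_id.const_mul I).diffContOnCl hrot
  have := right_half_plane_of_bounded_on_real (C := C) hd' ⟨1, one_lt_two, 0, ?_⟩ ?_ (fun x => ?_)
    (show 0 ≤ (-(I * z)).re by simpa using hz)
  · simpa [← mul_assoc] using this
  · refine Asymptotics.IsBigO.of_bound B (eventually_inf_principal.2 (.of_forall fun z hz => ?_))
    simpa using hB _ (hrot hz)
  · exact ⟨B, eventually_map.2 <| (eventually_gt_atTop 0).mono fun x hx => hB _ (by simpa using hx)⟩
  · simpa [mul_left_comm I] using hreal (-x)

end PhragmenLindelof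

theorem stmt4 (κ : ℂ → ℂ)
    (hcont : ContinuousOn κ {z : ℂ | 0 ≤ z.im})
    (hholo : DifferentiableOn ℂ κ {z : ℂ | 0 < z.im})
    (him : ∀ z : ℂ, 0 ≤ z.im → 0 ≤ (κ z).im)
    (hnonconst : ∃ z w : ℂ, 0 < z.im ∧ 0 < w.im ∧ κ z ≠ κ w)
    (f : ℝ → ℂ) (hf : Integrable f)
    (hcausal : ∀ᵐ t : ℝ, t < 0 → f t = 0)
    (hvanish : ∀ ω : ℝ, ∫ t : ℝ, f t * Complex.exp (Complex.I * κ (ω : ℂ) * (t : ℂ)) = 0) :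
    f =ᵐ[volume] 0 := by
  have hU : IsOpen {z : ℂ | 0 < z.im} := isOpen_lt continuous_const continuous_im
  have hUc : IsPreconnected {z : ℂ | 0 < z.im} := (convex_halfSpace_im_gt 0).isPreconnected
  obtain ⟨z₀, w₀, hz₀, hw₀, hne⟩ := hnonconst
  have hopen : IsOpen (κ '' {z : ℂ | 0 < z.im}) := hholo.isOpen_image_of_ne hU hUc hz₀ hw₀ hne
  have hmaps := mapsTo_im_pos_of_isOpen_image hopen fun z hz => him z hz.le
  have hFκ : ∀ z : ℂ, 0 ≤ z.im → fourierLaplace f (κ z) = 0 := fun z hz =>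
    norm_le_zero_iff.1 <| PhragmenLindelof.upper_half_plane_of_bounded
      ((diffContOnCl_fourierLaplace hf hcausal).comp
        ⟨hholo, by simpa only [closure_setOfPred_lt_im] using hcont⟩ hmaps)
      ⟨_, fun w hw => norm_fourierLaplace_le hf hcausal (hmaps hw).le⟩
      (fun x => by simp [fourierLaplace, hvanish]) hz
  have hF : EqOn (fourierLaplace f) 0 {z : ℂ | 0 < z.im} := by
    refine ((differentiableOn_fourierLaplace hf hcausal).analyticOnNhd hU)
      |>.eqOn_zero_of_preconnected_of_eventuallyEq_zero hUc (hmaps hz₀) ?_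
    filter_upwards [hopen.mem_nhds (mem_image_of_mem κ hz₀)]
    rintro _ ⟨z, hz, rfl⟩
    exact hFκ z hz.le
  have hFreal : EqOn (fourierLaplace f) 0 {z : ℂ | 0 ≤ z.im} :=
    hF.of_subset_closure (continuousOn_fourierLaplace hf hcausal) continuousOn_const
      (fun _ hz => le_of_lt hz.out) (by simp)
  refine hf.ae_eq_zero_of_fourier_eq_zero (funext fun w => ?_)
  rw [fourier_eq_fourierLaplace]
  exact hFreal (by simp)
end

section
/- Let h : ℝ²×ℝ → ℂ and φ : ℝ×ℝ² → ℂ be Schwartz functions, and let Q(t,ξ) = (t/(4π)) ∫_{S²} h((ξ,0)+tη) dS(η). Then both of the following integrals are absolutely convergent and equal: ∫₀^∞ ∫_{ℝ²} Q(t,ξ)·φ(t,ξ) dξ dt = ∫_{ℝ²×ℝ} h(x₁₂,x₃)·(R*φ)(x₁₂,x₃) dx₁₂ dx₃, where (R*φ)(x₁₂,x₃) = (1/(4π)) ∫_{ℝ²} φ(√(‖x₁₂−ξ‖² + x₃²), ξ) · (√(‖x₁₂−ξ‖² + x₃²))^{−1} dξ. -/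
open MeasureTheory Real Complex

/-- Embedding of `ℝ² × ℝ` into `ℝ³` (Euclidean). -/
noncomputable def emb (ξ : EuclideanSpace ℝ (Fin 2)) (r : ℝ) : EuclideanSpace ℝ (Fin 3) :=
  (EuclideanSpace.equiv (Fin 3) ℝ).symm ![ξ 0, ξ 1, r]

/-- Planar photoacoustic data `Q(t,ξ) = (t/(4π)) ∫_{S²} h((ξ,0)+tη) dS(η)`,
where `dS` is the surface measure on the unit sphere of `ℝ³`. -/
noncomputable def Q (h : EuclideanSpace ℝ (Fin 3) → ℂ) (t : ℝ)
    (ξ : EuclideanSpace ℝ (Fin 2)) : ℂ :=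
  ((t / (4 * π) : ℝ) : ℂ) * ∫ η : Metric.sphere (0 : EuclideanSpace ℝ (Fin 3)) 1,
    h (emb ξ 0 + t • (η : EuclideanSpace ℝ (Fin 3)))
    ∂((volume : Measure (EuclideanSpace ℝ (Fin 3))).toSphere)

/-- Backprojection operator:
`(R*φ)(x₁₂,x₃) = (1/(4π)) ∫_{ℝ²} φ(√(‖x₁₂−ξ‖² + x₃²), ξ)·(√(‖x₁₂−ξ‖² + x₃²))⁻¹ dξ`. -/
noncomputable def Rstar (g : ℝ × EuclideanSpace ℝ (Fin 2) → ℂ)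
    (x : EuclideanSpace ℝ (Fin 2) × ℝ) : ℂ :=
  ((1 / (4 * π) : ℝ) : ℂ) * ∫ ξ : EuclideanSpace ℝ (Fin 2),
    g (Real.sqrt (‖x.1 - ξ‖ ^ 2 + x.2 ^ 2), ξ) /
      ((Real.sqrt (‖x.1 - ξ‖ ^ 2 + x.2 ^ 2) : ℝ) : ℂ)

/-!
Both sides equal `∫_{ℝ²} ∫_{ℝ³} h((ξ,0) + x) φ(‖x‖, ξ) / (4π‖x‖) dx dξ`. On the left, for fixed `ξ`
the `t`-integral is the inner integral written in polar coordinates `x = tη` around `(ξ,0)`: the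
Jacobian `t²` turns the weight `t/(4π)` of `Q` into `1/(4πt)`. On the right, the shear
`(ξ, (x₁₂, x₃)) ↦ (ξ, (x₁₂ - ξ, x₃))` preserves Lebesgue measure, and Fubini swaps the two
integrals. Absolute convergence follows from the boundedness of `h`, the decay
`|φ(t,ξ)| ≤ C (1+|t|)⁻³ (1+‖ξ‖)⁻³` and the integrability of `‖x‖⁻¹ (1+‖x‖)⁻³` on `ℝ³`.
-/

open Set Metric Function
open scoped SchwartzMap

local notation "ℝ²" => EuclideanSpace ℝ (Fin 2)
local notation "ℝ³" => EuclideanSpace ℝ (Fin 3)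

lemma mul_one_add_rpow_neg_le {x : ℝ} (hx : 0 ≤ x) (r : ℝ) :
    x * (1 + x) ^ (-(r + 1)) ≤ (1 + x) ^ (-r) := by
  rw [neg_add, Real.rpow_add (by linarith), Real.rpow_neg_one, mul_left_comm, ← div_eq_mul_inv]
  exact mul_le_of_le_one_right (by positivity) (div_le_one_of_le₀ (by linarith) (by linarith))

namespace MeasureTheory

lemma measurePreserving_prod_sub_right {α G : Type*} [MeasurableSpace α] [AddGroup G]
    [MeasurableSpace G] [MeasurableAdd G] [MeasurableSub₂ G] (μ : Measure α) (ν : Measure G)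
    [SFinite μ] [SFinite ν] [ν.IsAddRightInvariant] {f : α → G} (hf : Measurable f) :
    MeasurePreserving (fun z : α × G ↦ (z.1, z.2 - f z.1)) (μ.prod ν) (μ.prod ν) :=
  (MeasurePreserving.id μ).skew_product (g := fun a x ↦ x - f a) (by fun_prop)
    (.of_forall fun a ↦ (measurePreserving_sub_right ν (f a)).map_eq)

variable {E F : Type*} [NormedAddCommGroup E] [NormedSpace ℝ E] [FiniteDimensional ℝ E]
  [MeasurableSpace E] [BorelSpace E] [Nontrivial E] (μ : Measure E) [μ.IsAddHaarMeasure]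
  [NormedAddCommGroup F] [NormedSpace ℝ F]

lemma integral_volumeIoiPow (n : ℕ) (g : ℝ → F) :
    ∫ r, g r ∂Measure.volumeIoiPow n = ∫ r in Ioi (0 : ℝ), r ^ n • g r := by
  simp only [Measure.volumeIoiPow, ENNReal.ofReal]
  rw [integral_withDensity_eq_integral_smul (measurable_subtype_coe.pow_const _).real_toNNReal,
    integral_subtype_comap measurableSet_Ioi fun r ↦ (r ^ n).toNNReal • g r]
  refine setIntegral_congr_fun measurableSet_Ioi fun r hr ↦ ?_
  rw [NNReal.smul_def, Real.coe_toNNReal _ (pow_nonneg (le_of_lt hr) _)]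

lemma integral_eq_integral_Ioi_integral_toSphere {f : E → F} (hf : Integrable f μ) :
    ∫ x, f x ∂μ = ∫ r in Ioi (0 : ℝ),
      r ^ (Module.finrank ℝ E - 1) • ∫ η, f (r • (η : E)) ∂μ.toSphere := by
  have hmp := μ.measurePreserving_homeomorphUnitSphereProd
  have hemb := (homeomorphUnitSphereProd E).measurableEmbedding
  have hpolar : ∀ x : ({0}ᶜ : Set E), ((homeomorphUnitSphereProd E x).2 : ℝ) •
      ((homeomorphUnitSphereProd E x).1 : E) = x := fun x ↦ by
    rw [← homeomorphUnitSphereProd_symm_apply_coe, Homeomorph.symm_apply_apply]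
  have hint : Integrable (fun p : sphere (0 : E) 1 × Ioi (0 : ℝ) ↦ f ((p.2 : ℝ) • (p.1 : E)))
      (μ.toSphere.prod (Measure.volumeIoiPow (Module.finrank ℝ E - 1))) := by
    rw [← hmp.integrable_comp_emb hemb, comp_def]
    simp only [hpolar]
    exact (integrableOn_iff_comap_subtypeVal (measurableSet_singleton _).compl).1 hf.integrableOn
  calc ∫ x, f x ∂μ = ∫ x : ({0}ᶜ : Set E), f x ∂μ.comap (↑) := by
        rw [integral_subtype_comap (measurableSet_singleton _).compl, restrict_compl_singleton]
    _ = ∫ p, f ((p.2 : ℝ) • (p.1 : E))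
        ∂μ.toSphere.prod (Measure.volumeIoiPow (Module.finrank ℝ E - 1)) := by
        simp only [← hmp.integral_comp hemb, hpolar]
    _ = _ := (integral_prod_symm _ hint).trans (integral_volumeIoiPow _
      fun r ↦ ∫ η, f (r • (η : E)) ∂μ.toSphere)

lemma integrable_inv_norm_mul_one_add_norm_rpow {r : ℝ} (hd : 2 ≤ Module.finrank ℝ E)
    (hr : (Module.finrank ℝ E : ℝ) - 1 < r) :
    Integrable (fun x : E ↦ ‖x‖⁻¹ * (1 + ‖x‖) ^ (-r)) μ := by
  set d := Module.finrank ℝ E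
  rw [integrable_fun_norm_addHaar μ (f := fun y ↦ y⁻¹ * (1 + y) ^ (-r))]
  have hdom : IntegrableOn (fun y : ℝ ↦ (1 + ‖y‖) ^ (-(r - (d - 2 : ℕ)))) (Ioi 0) :=
    (integrable_one_add_norm (by rw [Nat.cast_sub hd]; simp; linarith)).integrableOn
  refine hdom.mono' (by fun_prop) ?_
  filter_upwards [ae_restrict_mem measurableSet_Ioi] with y (hy : 0 < y)
  have hd1 : d - 1 = (d - 2) + 1 := by omega
  rw [smul_eq_mul, Real.norm_of_nonneg (by positivity), Real.norm_of_nonneg hy.le]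
  calc y ^ (d - 1) * (y⁻¹ * (1 + y) ^ (-r)) = y ^ (d - 2) * (1 + y) ^ (-r) := by
        rw [hd1, pow_succ]; field_simp
    _ ≤ (1 + y) ^ (d - 2) * (1 + y) ^ (-r) := by gcongr; linarith
    _ = (1 + y) ^ (-(r - (d - 2 : ℕ))) := by
        rw [← Real.rpow_natCast, ← Real.rpow_add (by linarith)]; ring_nf

end MeasureTheory

namespace SchwartzMap
variable {E F V : Type*} [NormedAddCommGroup E] [NormedSpace ℝ E] [NormedAddCommGroup F]
  [NormedSpace ℝ F] [NormedAddCommGroup V] [NormedSpace ℝ V]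

lemma exists_norm_apply_prod_le (f : 𝓢(E × F, V)) (k : ℕ) :
    ∃ C, 0 ≤ C ∧ ∀ x y, ‖f (x, y)‖ ≤ C * (1 + ‖x‖) ^ (-(k : ℝ)) * (1 + ‖y‖) ^ (-(k : ℝ)) := by
  refine ⟨2 ^ (2 * k) * (Finset.Iic (2 * k, 0)).sup (fun m ↦ SchwartzMap.seminorm ℝ m.1 m.2) f,
    by positivity, fun x y ↦ ?_⟩
  have hdecay := one_add_le_sup_seminorm_apply (𝕜 := ℝ) (m := (2 * k, 0)) le_rfl le_rfl f (x, y)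
  rw [norm_iteratedFDeriv_zero] at hdecay
  have hprod : (1 + ‖x‖) ^ k * (1 + ‖y‖) ^ k ≤ (1 + ‖(x, y)‖) ^ (2 * k) := by
    rw [two_mul, pow_add]
    gcongr
    exacts [norm_fst_le (x, y), norm_snd_le (x, y)]
  rw [Real.rpow_neg (by positivity), Real.rpow_neg (by positivity), Real.rpow_natCast,
    Real.rpow_natCast, mul_assoc, ← mul_inv, ← div_eq_mul_inv, le_div_iff₀ (by positivity)]
  calc ‖f (x, y)‖ * ((1 + ‖x‖) ^ k * (1 + ‖y‖) ^ k)
      ≤ (1 + ‖(x, y)‖) ^ (2 * k) * ‖f (x, y)‖ := by rw [mul_comm]; gcongr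
    _ ≤ _ := hdecay

end SchwartzMap

lemma emb_sub (a b : ℝ²) (r s : ℝ) : emb a r - emb b s = emb (a - b) (r - s) := by
  ext i
  fin_cases i <;> simp [emb]

lemma norm_emb (ξ : ℝ²) (r : ℝ) : ‖emb ξ r‖ = √(‖ξ‖ ^ 2 + r ^ 2) := by
  simp [EuclideanSpace.norm_eq, Fin.sum_univ_succ, emb, Real.sq_sqrt, add_nonneg, add_assoc,
    sq_nonneg]

@[fun_prop]
lemma Continuous.emb {α : Type*} [TopologicalSpace α] {f : α → ℝ²} {g : α → ℝ}
    (hf : Continuous f) (hg : Continuous g) : Continuous fun a ↦ emb (f a) (g a) := by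
  unfold _root_.emb; fun_prop

lemma measurePreserving_emb :
    MeasurePreserving (fun p : ℝ² × ℝ ↦ emb p.1 p.2) volume volume := by
  have e2 := EuclideanSpace.volume_preserving_symm_measurableEquiv_toLp (Fin 2)
  have e3 := (EuclideanSpace.volume_preserving_symm_measurableEquiv_toLp (Fin 3)).symm
  have epi := (volume_preserving_piFinSuccAbove (fun _ : Fin 3 ↦ ℝ) 2).symm
  refine (((e3.comp epi).comp Measure.measurePreserving_swap).comp
    (e2.prod (MeasurePreserving.id volume))).congr (by fun_prop)
    (.of_forall fun p ↦ ?_)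
  ext i
  fin_cases i <;> rfl

noncomputable def pairingKernel (h : ℝ³ → ℂ) (φ : ℝ × ℝ² → ℂ) (ξ : ℝ²) (x : ℝ³) : ℂ :=
  h (emb ξ 0 + x) * φ (‖x‖, ξ) / (4 * π * ‖x‖ : ℝ)

section
variable (h : 𝓢(ℝ³, ℂ)) (φ : 𝓢(ℝ × ℝ², ℂ))

lemma measurable_pairingKernel : Measurable (uncurry (pairingKernel h φ)) := by
  unfold pairingKernel
  fun_prop

lemma norm_pairingKernel_le {C : ℝ}
    (hφ : ∀ t ξ, ‖φ (t, ξ)‖ ≤ C * (1 + ‖t‖) ^ (-3 : ℝ) * (1 + ‖ξ‖) ^ (-3 : ℝ)) (ξ : ℝ²) (x : ℝ³) :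
    ‖pairingKernel h φ ξ x‖ ≤ SchwartzMap.seminorm ℝ 0 0 h * C / (4 * π) * (1 + ‖ξ‖) ^ (-3 : ℝ)
      * (‖x‖⁻¹ * (1 + ‖x‖) ^ (-3 : ℝ)) := by
  have hφx := hφ ‖x‖ ξ
  rw [norm_norm] at hφx
  rw [pairingKernel, norm_div, norm_mul, Complex.norm_real, Real.norm_of_nonneg (by positivity)]
  calc ‖h (emb ξ 0 + x)‖ * ‖φ (‖x‖, ξ)‖ / (4 * π * ‖x‖)
      ≤ SchwartzMap.seminorm ℝ 0 0 h * (C * (1 + ‖x‖) ^ (-3 : ℝ) * (1 + ‖ξ‖) ^ (-3 : ℝ))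
        / (4 * π * ‖x‖) := by
        gcongr
        exact SchwartzMap.norm_le_seminorm ℝ h _
    _ = _ := by rw [div_eq_mul_inv, mul_inv]; ring

lemma integrable_pairingKernel : Integrable (uncurry (pairingKernel h φ)) (volume.prod volume) := by
  obtain ⟨C, -, hC⟩ := φ.exists_norm_apply_prod_le 3
  have hξ : Integrable (fun ξ : ℝ² ↦ SchwartzMap.seminorm ℝ 0 0 h * C / (4 * π)
      * (1 + ‖ξ‖) ^ (-3 : ℝ)) :=
    (integrable_one_add_norm (by simp; norm_num)).const_mul _
  have hx : Integrable (fun x : ℝ³ ↦ ‖x‖⁻¹ * (1 + ‖x‖) ^ (-3 : ℝ)) :=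
    integrable_inv_norm_mul_one_add_norm_rpow volume (by simp) (by simp)
  refine (hξ.mul_prod hx).mono' (measurable_pairingKernel h φ).aestronglyMeasurable
    (.of_forall fun z ↦ ?_)
  exact norm_pairingKernel_le h φ (by exact_mod_cast hC) z.1 z.2

lemma continuous_Q : Continuous (fun p : ℝ × ℝ² ↦ Q h p.1 p.2) := by
  have hint := continuous_parametric_integral_of_continuous
    (μ := (volume : Measure ℝ³).toSphere) (f := fun (p : ℝ × ℝ²) (η : sphere (0 : ℝ³) 1) ↦
      h (emb p.2 0 + p.1 • (η : ℝ³))) (by fun_prop) isCompact_univ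
  rw [Measure.restrict_univ] at hint
  unfold Q
  fun_prop

lemma Q_mul_eq_integral_pairingKernel (ξ : ℝ²) {t : ℝ} (ht : 0 < t) :
    Q h t ξ * φ (t, ξ) =
      t ^ 2 • ∫ η : sphere (0 : ℝ³) 1, pairingKernel h φ ξ (t • (η : ℝ³))
        ∂(volume : Measure ℝ³).toSphere := by
  have hnorm (η : sphere (0 : ℝ³) 1) : ‖t • (η : ℝ³)‖ = t := by
    rw [norm_smul, norm_eq_of_mem_sphere η, mul_one, Real.norm_of_nonneg ht.le]
  simp only [pairingKernel, hnorm, integral_div, integral_mul_const, Q, Complex.real_smul]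
  push_cast
  field_simp

lemma integral_Ioi_Q_mul_eq_integral_pairingKernel (ξ : ℝ²)
    (hξ : Integrable (pairingKernel h φ ξ)) :
    ∫ t in Ioi (0 : ℝ), Q h t ξ * φ (t, ξ) = ∫ x, pairingKernel h φ ξ x := by
  rw [integral_eq_integral_Ioi_integral_toSphere volume hξ, finrank_euclideanSpace_fin]
  exact setIntegral_congr_fun measurableSet_Ioi fun t ht ↦
    Q_mul_eq_integral_pairingKernel h φ ξ ht

lemma norm_Q_le (t : ℝ) (ξ : ℝ²) :
    ‖Q h t ξ‖ ≤ ‖t‖ / (4 * π) * (SchwartzMap.seminorm ℝ 0 0 h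
      * (volume : Measure ℝ³).toSphere.real univ) := by
  rw [Q, norm_mul, Complex.norm_real, norm_div, Real.norm_of_nonneg (by positivity : 0 ≤ 4 * π)]
  gcongr
  exact norm_integral_le_of_norm_le_const (.of_forall fun η ↦ SchwartzMap.norm_le_seminorm ℝ h _)

lemma integrable_Q_mul :
    Integrable (uncurry fun t ξ ↦ Q h t ξ * φ (t, ξ)) ((volume.restrict (Ioi 0)).prod volume) := by
  obtain ⟨C, hC0, hC⟩ := φ.exists_norm_apply_prod_le 3
  set A := SchwartzMap.seminorm ℝ 0 0 h * (volume : Measure ℝ³).toSphere.real univ * C / (4 * π)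
  have ht : Integrable (fun t : ℝ ↦ A * (1 + ‖t‖) ^ (-2 : ℝ)) (volume.restrict (Ioi 0)) :=
    ((integrable_one_add_norm (by simp)).const_mul _).restrict
  have hξ : Integrable (fun ξ : ℝ² ↦ (1 + ‖ξ‖) ^ (-3 : ℝ)) :=
    integrable_one_add_norm (by simp; norm_num)
  refine (ht.mul_prod hξ).mono' (continuous_Q h |>.mul φ.continuous).aestronglyMeasurable
    (.of_forall fun ⟨t, ξ⟩ ↦ ?_)
  have hφ := hC t ξ
  push_cast at hφ
  calc ‖Q h t ξ * φ (t, ξ)‖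
      ≤ ‖t‖ / (4 * π) * (SchwartzMap.seminorm ℝ 0 0 h * (volume : Measure ℝ³).toSphere.real univ)
        * (C * (1 + ‖t‖) ^ (-3 : ℝ) * (1 + ‖ξ‖) ^ (-3 : ℝ)) := by
        rw [norm_mul]
        gcongr
        exact norm_Q_le h t ξ
    _ = A * (‖t‖ * (1 + ‖t‖) ^ (-(2 + 1) : ℝ)) * (1 + ‖ξ‖) ^ (-3 : ℝ) := by
        simp only [A]; norm_num; ring
    _ ≤ A * (1 + ‖t‖) ^ (-2 : ℝ) * (1 + ‖ξ‖) ^ (-3 : ℝ) := by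
        gcongr
        exact mul_one_add_rpow_neg_le (norm_nonneg t) 2

lemma integral_Ioi_integral_Q_mul :
    ∫ t in Ioi (0 : ℝ), ∫ ξ, Q h t ξ * φ (t, ξ) = ∫ ξ, ∫ x, pairingKernel h φ ξ x := by
  rw [integral_integral_swap (integrable_Q_mul h φ)]
  refine integral_congr_ae ?_
  filter_upwards [(integrable_pairingKernel h φ).prod_right_ae] with ξ hξ
  exact integral_Ioi_Q_mul_eq_integral_pairingKernel h φ ξ hξ

lemma mul_Rstar_eq_integral_pairingKernel (p : ℝ² × ℝ) :
    h (emb p.1 p.2) * Rstar φ p = ∫ ξ, pairingKernel h φ ξ (emb p.1 p.2 - emb ξ 0) := by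
  simp only [pairingKernel, add_sub_cancel]
  simp only [emb_sub, sub_zero, norm_emb, Rstar]
  rw [← integral_const_mul, ← integral_const_mul]
  congr 1 with ξ
  push_cast
  ring

lemma measurePreserving_emb_sub :
    MeasurePreserving (fun q : ℝ² × (ℝ² × ℝ) ↦ (q.1, emb q.2.1 q.2.2 - emb q.1 0))
      (volume.prod volume) (volume.prod volume) :=
  (measurePreserving_prod_sub_right volume volume (f := fun ξ : ℝ² ↦ emb ξ 0) (by fun_prop)).comp
    ((MeasurePreserving.id volume).prod measurePreserving_emb)

lemma integrable_pairingKernel_emb_sub :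
    Integrable (fun q : ℝ² × (ℝ² × ℝ) ↦ pairingKernel h φ q.1 (emb q.2.1 q.2.2 - emb q.1 0))
      (volume.prod volume) :=
  (measurePreserving_emb_sub.integrable_comp
    (measurable_pairingKernel h φ).aestronglyMeasurable).2 (integrable_pairingKernel h φ)

lemma integrable_mul_Rstar : Integrable (fun p : ℝ² × ℝ ↦ h (emb p.1 p.2) * Rstar φ p) := by
  simp only [mul_Rstar_eq_integral_pairingKernel]
  exact (integrable_pairingKernel_emb_sub h φ).integral_prod_right

lemma integral_mul_Rstar :
    ∫ p : ℝ² × ℝ, h (emb p.1 p.2) * Rstar φ p = ∫ ξ, ∫ x, pairingKernel h φ ξ x := by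
  simp only [mul_Rstar_eq_integral_pairingKernel]
  calc ∫ p : ℝ² × ℝ, ∫ ξ, pairingKernel h φ ξ (emb p.1 p.2 - emb ξ 0)
      = ∫ q : ℝ² × (ℝ² × ℝ), pairingKernel h φ q.1 (emb q.2.1 q.2.2 - emb q.1 0)
          ∂volume.prod volume :=
        (integral_prod_symm _ (integrable_pairingKernel_emb_sub h φ)).symm
    _ = ∫ z, uncurry (pairingKernel h φ) z ∂volume.prod volume := by
        rw [← measurePreserving_emb_sub.map_eq, integral_map measurePreserving_emb_sub.aemeasurable
          (measurable_pairingKernel h φ).aestronglyMeasurable]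
        rfl
    _ = ∫ ξ, ∫ x, pairingKernel h φ ξ x := integral_prod _ (integrable_pairingKernel h φ)

end

theorem stmt7 (h : SchwartzMap (EuclideanSpace ℝ (Fin 3)) ℂ)
    (φ : SchwartzMap (ℝ × EuclideanSpace ℝ (Fin 2)) ℂ) :
    IntegrableOn (fun p : ℝ × EuclideanSpace ℝ (Fin 2) => Q (⇑h) p.1 p.2 * φ p)
        (Set.Ioi (0 : ℝ) ×ˢ (Set.univ : Set (EuclideanSpace ℝ (Fin 2)))) ∧
    Integrable (fun x : EuclideanSpace ℝ (Fin 2) × ℝ =>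
        h (emb x.1 x.2) * Rstar (⇑φ) x) ∧
    (∫ t in Set.Ioi (0 : ℝ), ∫ ξ : EuclideanSpace ℝ (Fin 2), Q (⇑h) t ξ * φ (t, ξ))
      = ∫ x : EuclideanSpace ℝ (Fin 2) × ℝ, h (emb x.1 x.2) * Rstar (⇑φ) x := by
  refine ⟨?_, integrable_mul_Rstar h φ, ?_⟩
  · rw [IntegrableOn, Measure.volume_eq_prod, ← Measure.prod_restrict, Measure.restrict_univ]
    exact integrable_Q_mul h φ
  · rw [integral_Ioi_integral_Q_mul, integral_mul_Rstar]
end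

section
/- There exists a continuous linear map E₁ from the Schwartz space 𝒮(ℝ×ℝ², ℂ) to itself such that for every ψ ∈ 𝒮(ℝ×ℝ², ℂ) and every (ω,σ) ∈ ℝ×ℝ², (E₁ψ)(ω,σ) = 8πi · ψ(ω² − ‖σ‖², σ); moreover (E₁ψ)(−ω,σ) = (E₁ψ)(ω,σ) for all (ω,σ). -/
/-! Writing `g (ω, σ) = (ω ^ 2 - ‖σ‖ ^ 2, σ)`, the operator is `ψ ↦ 8πi · ψ ∘ g`. Composition with
`g` preserves Schwartz functions continuously because `g` has temperate growth and is
polynomially proper: `‖x‖ ≤ 1 + ‖g x‖`, since `ω ^ 2 ≤ |ω ^ 2 - ‖σ‖ ^ 2| + ‖σ‖ ^ 2`. Evenness in `ω`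
holds because `g` only sees `ω ^ 2`. -/

open Real

theorem Function.HasTemperateGrowth.prodMk {E F G : Type*}
    [NormedAddCommGroup E] [NormedSpace ℝ E] [NormedAddCommGroup F] [NormedSpace ℝ F]
    [NormedAddCommGroup G] [NormedSpace ℝ G] {f : E → F} {g : E → G}
    (hf : f.HasTemperateGrowth) (hg : g.HasTemperateGrowth) :
    (fun x ↦ (f x, g x)).HasTemperateGrowth := by
  have h : (fun x ↦ (f x, g x)) =
      fun x ↦ ContinuousLinearMap.inl ℝ F G (f x) + ContinuousLinearMap.inr ℝ F G (g x) := by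
    ext x <;> simp
  rw [h]
  fun_prop

noncomputable section

variable {H : Type*} [NormedAddCommGroup H]

def minkowskiSqMap (x : ℝ × H) : ℝ × H := (x.1 ^ 2 - ‖x.2‖ ^ 2, x.2)

theorem minkowskiSqMap_neg_fst (t : ℝ) (v : H) :
    minkowskiSqMap (-t, v) = minkowskiSqMap (t, v) := by
  simp [minkowskiSqMap]

theorem norm_le_one_add_norm_minkowskiSqMap (x : ℝ × H) : ‖x‖ ≤ 1 + ‖minkowskiSqMap x‖ := by
  obtain ⟨t, v⟩ := x
  set m := ‖minkowskiSqMap (t, v)‖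
  have hm : 0 ≤ m := norm_nonneg _
  have hv : ‖v‖ ≤ m := norm_snd_le (minkowskiSqMap (t, v))
  have hq : |t ^ 2 - ‖v‖ ^ 2| ≤ m := norm_fst_le (minkowskiSqMap (t, v))
  have ht : |t| ≤ 1 + m := by
    refine abs_le_of_sq_le_sq' ?_ (by positivity) |>.2
    rw [sq_abs]
    nlinarith [le_abs_self (t ^ 2 - ‖v‖ ^ 2), mul_le_mul hv hv (norm_nonneg v) hm]
  exact norm_prod_le_iff.2 ⟨ht, hv.trans (by linarith)⟩

variable [InnerProductSpace ℝ H]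

theorem minkowskiSqMap_hasTemperateGrowth : (minkowskiSqMap (H := H)).HasTemperateGrowth := by
  have hfst := (ContinuousLinearMap.fst ℝ ℝ H).hasTemperateGrowth
  have hsnd := (ContinuousLinearMap.snd ℝ ℝ H).hasTemperateGrowth
  exact ((hfst.pow 2).sub ((Function.hasTemperateGrowth_norm_sq H).comp hsnd)).prodMk hsnd

namespace SchwartzMap

variable {𝕜 F : Type*} [RCLike 𝕜] [NormedAddCommGroup F] [NormedSpace ℝ F] [NormedSpace 𝕜 F]

def compMinkowskiSqCLM : 𝓢(ℝ × H, F) →L[𝕜] 𝓢(ℝ × H, F) :=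
  compCLM 𝕜 minkowskiSqMap_hasTemperateGrowth
    ⟨1, 1, fun x ↦ by simpa using norm_le_one_add_norm_minkowskiSqMap x⟩

@[simp]
theorem compMinkowskiSqCLM_apply (ψ : 𝓢(ℝ × H, F)) (x : ℝ × H) :
    compMinkowskiSqCLM (𝕜 := 𝕜) ψ x = ψ (minkowskiSqMap x) := rfl

end SchwartzMap

end

theorem stmt11 :
    ∃ E₁ : SchwartzMap (ℝ × EuclideanSpace ℝ (Fin 2)) ℂ →L[ℂ]
        SchwartzMap (ℝ × EuclideanSpace ℝ (Fin 2)) ℂ,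
      ∀ ψ : SchwartzMap (ℝ × EuclideanSpace ℝ (Fin 2)) ℂ,
        (∀ (ω : ℝ) (σ : EuclideanSpace ℝ (Fin 2)),
          E₁ ψ (ω, σ) = 8 * (π : ℂ) * Complex.I * ψ (ω ^ 2 - ‖σ‖ ^ 2, σ)) ∧
        (∀ (ω : ℝ) (σ : EuclideanSpace ℝ (Fin 2)), E₁ ψ (-ω, σ) = E₁ ψ (ω, σ)) := by
  refine ⟨(8 * (π : ℂ) * Complex.I) • SchwartzMap.compMinkowskiSqCLM, fun ψ ↦
    ⟨fun ω σ ↦ rfl, fun ω σ ↦ ?_⟩⟩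
  simp only [smul_apply, SchwartzMap.compMinkowskiSqCLM_apply, minkowskiSqMap_neg_fst]
end

section
/- Let u : ℝ → ℂ be a bounded measurable function and b ∈ ℂ such that the function ω ↦ u(ω) − b/(ω + i) is integrable on ℝ. Then there exists a bounded measurable function r : ℝ → ℂ such that for every Schwartz function φ : ℝ → ℂ, ∫_ℝ u(ω) · ( (1/√(2π)) ∫_ℝ φ(t) e^{iωt} dt ) dω = ∫_ℝ r(t) φ(t) dt (both integrals being absolutely convergent). In other words, a tempered distribution whose Fourier transform is a bounded function admitting the first-order asymptotic expansion b/(ω+i) + L¹-remainder at infinity is itself represented by a bounded function. -/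
open MeasureTheory Real Complex Set
open scoped FourierTransform

/-!
Write `u = v + b / (ω + i)` with `v ∈ L¹`. Against `v`, Fubini moves the Fourier transform from
`φ` onto `v`, which gives the bounded function `t ↦ ∫ v(ω) e^{iωt} dω`. The term `b / (ω + i)` is
itself the Fourier transform of the integrable function `-i b 𝟙_{t > 0} e^{-t}`, so Fubini and
Fourier inversion turn it into `2π` times that function reflected, which is bounded too.
-/

/-- The paper's Fourier transform without its factor `1 / √(2π)`. -/
noncomputable def fourierExp (f : ℝ → ℂ) (ω : ℝ) : ℂ :=
  ∫ t : ℝ, f t * cexp (I * ((ω * t : ℝ) : ℂ))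

section
variable {f g : ℝ → ℂ}

lemma fourierExp_eq_fourier (f : ℝ → ℂ) (ω : ℝ) : fourierExp f ω = 𝓕 f (-ω / (2 * π)) := by
  rw [Real.fourier_real_eq_integral_exp_smul, fourierExp]
  congr 1 with t
  rw [smul_eq_mul, mul_comm]
  congr 2
  push_cast
  field_simp

lemma norm_fourierExp_le (f : ℝ → ℂ) (ω : ℝ) : ‖fourierExp f ω‖ ≤ ∫ t, ‖f t‖ :=
  (norm_integral_le_integral_norm _).trans_eq <| by
    simp only [norm_mul, norm_exp_I_mul_ofReal, mul_one]

lemma continuous_fourierExp (hf : Integrable f) : Continuous (fourierExp f) := by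
  refine continuous_of_dominated (bound := fun t => ‖f t‖) (fun ω => ?_) (fun ω => ?_) hf.norm ?_
  · exact hf.aestronglyMeasurable.mul (by fun_prop)
  · exact .of_forall fun t => by rw [norm_mul, norm_exp_I_mul_ofReal, mul_one]
  · exact .of_forall fun t => by fun_prop

lemma fourierExp_comp_mul_left (f : ℝ → ℂ) {a : ℝ} (ha : a ≠ 0) (ω : ℝ) :
    fourierExp (fun t => f (a * t)) ω = |a⁻¹| * fourierExp f (ω / a) := by
  have := Measure.integral_comp_mul_left (fun y => f y * cexp (I * (((ω / a) * y : ℝ) : ℂ))) a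
  rw [real_smul] at this
  rw [fourierExp, fourierExp, ← this]
  congr 1 with t
  rw [div_mul_eq_mul_div, mul_div_assoc, mul_div_cancel_left₀ t ha]

lemma SchwartzMap.integrable_fourierExp (φ : SchwartzMap ℝ ℂ) : Integrable (fourierExp φ) := by
  have h := (𝓕 φ).integrable.comp_mul_left' (R := -1 / (2 * π)) (by simp [pi_ne_zero])
  refine h.congr (.of_forall fun ω => ?_)
  rw [fourierExp_eq_fourier, SchwartzMap.fourier_coe]
  ring_nf

lemma SchwartzMap.fourierExp_fourierExp (φ : SchwartzMap ℝ ℂ) (s : ℝ) :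
    fourierExp (fourierExp φ) s = 2 * π * φ (-s) := by
  have hF : fourierExp φ = fun ω => 𝓕 (φ : ℝ → ℂ) (-1 / (2 * π) * ω) := by
    ext ω; rw [fourierExp_eq_fourier]; ring_nf
  have hinv : 𝓕 (𝓕 (φ : ℝ → ℂ)) s = φ (-s) := by
    rw [← neg_neg s, ← Real.fourierInv_eq_fourier_neg, neg_neg,
      φ.continuous.fourierInv_fourier_eq φ.integrable (𝓕 φ).integrable]
  rw [hF, fourierExp_comp_mul_left _ (by simp [pi_ne_zero]), fourierExp_eq_fourier]
  have hs : -(s / (-1 / (2 * π))) / (2 * π) = s := by field_simp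
  have hc : |(-1 / (2 * π))⁻¹| = 2 * π := by
    rw [abs_inv, abs_div, abs_neg, abs_one, abs_of_pos two_pi_pos]; simp
  rw [hs, hc, hinv]; push_cast; ring

lemma integral_mul_fourierExp_eq_integral_fourierExp_mul (hf : Integrable f) (hg : Integrable g) :
    ∫ ω, f ω * fourierExp g ω = ∫ t, fourierExp f t * g t := by
  have hprod : Integrable (fun p : ℝ × ℝ => f p.1 * (g p.2 * cexp (I * ((p.1 * p.2 : ℝ) : ℂ))))
      (volume.prod volume) := by
    refine (hf.norm.mul_prod hg.norm).mono' ?_ (.of_forall fun p => ?_)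
    · have hexp : Continuous fun p : ℝ × ℝ => cexp (I * ((p.1 * p.2 : ℝ) : ℂ)) := by fun_prop
      exact hf.aestronglyMeasurable.comp_fst.mul
        (hg.aestronglyMeasurable.comp_snd.mul hexp.aestronglyMeasurable)
    · rw [norm_mul, norm_mul, norm_exp_I_mul_ofReal, mul_one]
  calc ∫ ω, f ω * fourierExp g ω
      = ∫ ω, ∫ t, f ω * (g t * cexp (I * ((ω * t : ℝ) : ℂ))) := by
        simp only [fourierExp, integral_const_mul]
    _ = ∫ t, ∫ ω, f ω * (g t * cexp (I * ((ω * t : ℝ) : ℂ))) := integral_integral_swap hprod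
    _ = ∫ t, fourierExp f t * g t := by
        simp only [fourierExp, ← integral_mul_const]
        congr 1 with t; congr 1 with ω
        rw [mul_comm t ω]; ring

lemma SchwartzMap.integral_fourierExp_mul_fourierExp (φ : SchwartzMap ℝ ℂ) (hg : Integrable g) :
    ∫ ω, fourierExp g ω * fourierExp φ ω = ∫ t, 2 * π * g (-t) * φ t := by
  calc ∫ ω, fourierExp g ω * fourierExp φ ω
      = ∫ ω, fourierExp φ ω * fourierExp g ω := by simp only [mul_comm]
    _ = ∫ t, 2 * π * φ (-t) * g t := by
        simp only [integral_mul_fourierExp_eq_integral_fourierExp_mul φ.integrable_fourierExp hg,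
          φ.fourierExp_fourierExp]
    _ = ∫ t, 2 * π * g (-t) * φ t := by
        rw [← integral_neg_eq_self]; simp only [neg_neg, mul_right_comm]

end

noncomputable def resolventKernel (b : ℂ) : ℝ → ℂ := (Ioi 0).indicator fun t => -I * b * cexp (-t)

lemma fourierExp_resolventKernel (b : ℂ) (ω : ℝ) :
    fourierExp (resolventKernel b) ω = b / (ω + I) := by
  have hkernel : ∀ t : ℝ, resolventKernel b t * cexp (I * ((ω * t : ℝ) : ℂ))
      = (Ioi 0).indicator (fun t : ℝ => -I * b * cexp ((I * ω - 1) * t)) t := by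
    intro t
    by_cases ht : t ∈ Ioi 0
    · simp only [resolventKernel, indicator_of_mem ht, mul_assoc, ← Complex.exp_add]
      push_cast; ring_nf
    · simp [resolventKernel, indicator_of_notMem ht]
  have hre : (I * ω - 1).re < 0 := by simp
  have hne : (ω : ℂ) + I ≠ 0 := fun h => by simpa using congrArg Complex.im h
  simp only [fourierExp, hkernel, integral_indicator measurableSet_Ioi, integral_const_mul,
    integral_exp_mul_complex_Ioi hre]
  have hfactor : I * ω - 1 = I * (ω + I) := by rw [mul_add, I_mul_I]; ring
  rw [hfactor]; field_simp; simp

lemma integrable_resolventKernel (b : ℂ) : Integrable (resolventKernel b) := by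
  refine (integrable_indicator_iff measurableSet_Ioi).2 ?_
  refine ((integrableOn_exp_mul_complex_Ioi (a := -1) (by simp) 0).const_mul (-I * b)).congr ?_
  exact .of_forall fun t => by simp

lemma norm_resolventKernel_le (b : ℂ) (t : ℝ) : ‖resolventKernel b t‖ ≤ ‖b‖ := by
  by_cases ht : t ∈ Ioi 0
  · simp only [resolventKernel, indicator_of_mem ht, norm_mul, norm_neg, norm_I, one_mul]
    rw [← ofReal_neg, norm_exp_ofReal]
    exact mul_le_of_le_one_right (norm_nonneg b) (exp_le_one_iff.2 (by simp at ht; linarith))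
  · simp [resolventKernel, indicator_of_notMem ht]

lemma measurable_resolventKernel (b : ℂ) : Measurable (resolventKernel b) :=
  Measurable.indicator (by fun_prop) measurableSet_Ioi

section
variable {u g : ℝ → ℂ}

lemma integrable_mul_fourierExp_schwartz (hv : Integrable fun ω => u ω - fourierExp g ω)
    (hg : Integrable g) (φ : SchwartzMap ℝ ℂ) : Integrable fun ω => u ω * fourierExp φ ω := by
  have hvφ := hv.mul_bdd (continuous_fourierExp φ.integrable).aestronglyMeasurable
    (.of_forall (norm_fourierExp_le φ))
  have hgφ := φ.integrable_fourierExp.bdd_mul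
    (continuous_fourierExp hg).aestronglyMeasurable (.of_forall (norm_fourierExp_le g))
  exact (hvφ.add hgφ).congr (.of_forall fun ω => by simp only [Pi.add_apply]; ring)

lemma integral_mul_fourierExp_schwartz (hv : Integrable fun ω => u ω - fourierExp g ω)
    (hg : Integrable g) (φ : SchwartzMap ℝ ℂ) :
    ∫ ω, u ω * fourierExp φ ω =
      ∫ t, (fourierExp (fun ω => u ω - fourierExp g ω) t + 2 * π * g (-t)) * φ t := by
  obtain ⟨C, hC⟩ : ∃ C, ∀ t, ‖φ t‖ ≤ C :=
    ⟨_, fun t => (φ.toBoundedContinuousFunction).norm_coe_le_norm t⟩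
  have hFφ := continuous_fourierExp φ.integrable
  have hFg := continuous_fourierExp hg
  have hvφ := hv.mul_bdd hFφ.aestronglyMeasurable (.of_forall (norm_fourierExp_le φ))
  have hgφ := φ.integrable_fourierExp.bdd_mul hFg.aestronglyMeasurable
    (.of_forall (norm_fourierExp_le g))
  have hFvφ := (φ.integrable (μ := volume)).bdd_mul (continuous_fourierExp hv).aestronglyMeasurable
    (.of_forall (norm_fourierExp_le _))
  have hgnegφ := ((hg.comp_neg).const_mul (2 * π : ℂ)).mul_bdd φ.continuous.aestronglyMeasurable
    (.of_forall hC)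
  calc ∫ ω, u ω * fourierExp φ ω
      = (∫ ω, (u ω - fourierExp g ω) * fourierExp φ ω) + ∫ ω, fourierExp g ω * fourierExp φ ω := by
        rw [← integral_add hvφ hgφ]; congr 1 with ω; ring
    _ = (∫ t, fourierExp (fun ω => u ω - fourierExp g ω) t * φ t) + ∫ t, 2 * π * g (-t) * φ t := by
        rw [integral_mul_fourierExp_eq_integral_fourierExp_mul hv φ.integrable,
          φ.integral_fourierExp_mul_fourierExp hg]
    _ = _ := by rw [← integral_add hFvφ hgnegφ]; congr 1 with t; ring

end

theorem stmt16_general (u : ℝ → ℂ) (b : ℂ)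
    (hL1 : Integrable (fun ω : ℝ => u ω - b / ((ω : ℂ) + Complex.I))) :
    ∃ r : ℝ → ℂ, Measurable r ∧ (∃ C : ℝ, ∀ t : ℝ, ‖r t‖ ≤ C) ∧
      ∀ φ : SchwartzMap ℝ ℂ,
        Integrable (fun ω : ℝ =>
          u ω * (((1 / Real.sqrt (2 * π) : ℝ) : ℂ) *
            ∫ t : ℝ, φ t * Complex.exp (Complex.I * ((ω * t : ℝ) : ℂ)))) ∧
        Integrable (fun t : ℝ => r t * φ t) ∧
        (∫ ω : ℝ, u ω * (((1 / Real.sqrt (2 * π) : ℝ) : ℂ) *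
            ∫ t : ℝ, φ t * Complex.exp (Complex.I * ((ω * t : ℝ) : ℂ))))
          = ∫ t : ℝ, r t * φ t := by
  set c : ℂ := ((1 / Real.sqrt (2 * π) : ℝ) : ℂ)
  set g := resolventKernel b
  have hg : Integrable g := integrable_resolventKernel b
  have hv : Integrable fun ω => u ω - fourierExp g ω := by
    simpa only [g, fourierExp_resolventKernel] using hL1
  set v := fun ω => u ω - fourierExp g ω
  set r := fun t => c * (fourierExp v t + 2 * π * g (-t))
  have hr_meas : Measurable r := measurable_const.mul <| (continuous_fourierExp hv).measurable.add
    (measurable_const.mul ((measurable_resolventKernel b).comp measurable_neg))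
  have hr_bdd : ∀ t, ‖r t‖ ≤ ‖c‖ * ((∫ ω, ‖v ω‖) + 2 * π * ‖b‖) := fun t => by
    rw [norm_mul]
    gcongr
    refine (norm_add_le _ _).trans (add_le_add (norm_fourierExp_le v t) ?_)
    rw [norm_mul, show ‖(2 * π : ℂ)‖ = 2 * π by simp [pi_pos.le]]
    gcongr
    exact norm_resolventKernel_le b (-t)
  refine ⟨r, hr_meas, ⟨_, hr_bdd⟩, fun φ => ⟨?_, ?_, ?_⟩⟩
  · exact ((integrable_mul_fourierExp_schwartz hv hg φ).const_mul c).congr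
      (.of_forall fun ω => by simp only [fourierExp]; ring)
  · exact (φ.integrable (μ := volume)).bdd_mul hr_meas.aestronglyMeasurable (.of_forall hr_bdd)
  · calc _ = c * ∫ ω, u ω * fourierExp φ ω := by
          rw [← integral_const_mul]; congr 1 with ω; simp only [fourierExp]; ring
      _ = ∫ t, r t * φ t := by
          rw [integral_mul_fourierExp_schwartz hv hg φ, ← integral_const_mul]
          congr 1 with t; ring

theorem stmt16 (u : ℝ → ℂ) (b : ℂ)
    (humeas : Measurable u) (hubdd : ∃ C : ℝ, ∀ ω : ℝ, ‖u ω‖ ≤ C)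
    (hL1 : Integrable (fun ω : ℝ => u ω - b / ((ω : ℂ) + Complex.I))) :
    ∃ r : ℝ → ℂ, Measurable r ∧ (∃ C : ℝ, ∀ t : ℝ, ‖r t‖ ≤ C) ∧
      ∀ φ : SchwartzMap ℝ ℂ,
        Integrable (fun ω : ℝ =>
          u ω * (((1 / Real.sqrt (2 * π) : ℝ) : ℂ) *
            ∫ t : ℝ, φ t * Complex.exp (Complex.I * ((ω * t : ℝ) : ℂ)))) ∧
        Integrable (fun t : ℝ => r t * φ t) ∧
        (∫ ω : ℝ, u ω * (((1 / Real.sqrt (2 * π) : ℝ) : ℂ) *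
            ∫ t : ℝ, φ t * Complex.exp (Complex.I * ((ω * t : ℝ) : ℂ))))
          = ∫ t : ℝ, r t * φ t :=
  stmt16_general u b hL1
end

section
/- Let h : ℝ³ → ℂ be a Schwartz function and fix ξ ∈ ℝ³. Then for every z in the open upper half-plane ℍ⁺ = {z ∈ ℂ : Im z > 0}, the integral F(z) = ∫_{ℝ³} e^{i z ‖ξ − y‖} · ‖ξ − y‖^{−1} · h(y) dy is absolutely convergent, and the function F is holomorphic (complex differentiable) on ℍ⁺. -/
/-!
Away from `ξ` the kernel `‖ξ - y‖⁻¹` is bounded by `1`, and near `ξ` it is locally integrable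
because `1 < 3 = dim ℝ³`; since a Schwartz function is bounded and integrable, the integrand is
dominated by an integrable function uniformly in `z ∈ ℍ⁺`. Differentiating under the integral sign
brings down the factor `i ‖ξ - y‖`, which cancels the singularity, so the `z`-derivative of the
integrand is dominated by `|h|` on all of `ℍ⁺`.
-/

open MeasureTheory Complex Metric Set

section InverseNorm

variable {E F : Type*} [NormedAddCommGroup E] [NormedSpace ℝ E] [FiniteDimensional ℝ E]
  [MeasurableSpace E] [BorelSpace E] [NormedAddCommGroup F] [NormedSpace ℝ F]
  {μ : Measure E} [μ.IsAddHaarMeasure]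

theorem locallyIntegrable_inv_norm (hd : 1 < Module.finrank ℝ E) :
    LocallyIntegrable (fun x : E => ‖x‖⁻¹) μ :=
  locallyIntegrable_of_norm_le_rpow (C := 1) (α := 1) hd.le (by exact_mod_cast hd)
    (.of_forall fun x => by simp [Real.rpow_neg_one])
    measurable_norm.inv.aestronglyMeasurable

theorem integrable_inv_norm_smul (hd : 1 < Module.finrank ℝ E) {g : E → F} {C : ℝ}
    (hg : Integrable g μ) (hC : ∀ y, ‖g y‖ ≤ C) :
    Integrable (fun y => ‖y‖⁻¹ • g y) μ := by
  have hball : Integrable ((ball (0 : E) 1).indicator fun y => C * ‖y‖⁻¹) μ :=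
    (integrable_indicator_iff measurableSet_ball).2 <|
      ((locallyIntegrable_inv_norm hd).integrableOn_isCompact (isCompact_closedBall 0 1)).mono_set
        ball_subset_closedBall |>.const_mul C
  refine (hball.add hg.norm).mono' (measurable_norm.inv.aestronglyMeasurable.smul hg.1)
    (.of_forall fun y => ?_)
  rw [norm_smul, Real.norm_of_nonneg (inv_nonneg.2 (norm_nonneg y))]
  by_cases hy : y ∈ ball (0 : E) 1
  · have : ‖y‖⁻¹ * ‖g y‖ ≤ C * ‖y‖⁻¹ := by
      rw [mul_comm]; gcongr; exact hC y
    simp only [Pi.add_apply, indicator_of_mem hy]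
    linarith [norm_nonneg (g y)]
  · have hy1 : 1 ≤ ‖y‖ := by simpa using hy
    have : ‖y‖⁻¹ * ‖g y‖ ≤ ‖g y‖ :=
      mul_le_of_le_one_left (norm_nonneg _) (inv_le_one_of_one_le₀ hy1)
    simpa only [Pi.add_apply, indicator_of_notMem hy, zero_add] using this

theorem integrable_inv_norm_sub_smul (hd : 1 < Module.finrank ℝ E) {g : E → F} {C : ℝ}
    (hg : Integrable g μ) (hC : ∀ y, ‖g y‖ ≤ C) (ξ : E) :
    Integrable (fun y => ‖ξ - y‖⁻¹ • g y) μ := by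
  simpa [norm_sub_rev] using
    (integrable_inv_norm_smul hd (hg.comp_add_right ξ) fun y => hC _).comp_sub_right ξ

end InverseNorm

section UpperHalfPlane

variable {α : Type*} [MeasurableSpace α] {μ : Measure α} {r : α → ℝ} {g : α → ℂ}

theorem norm_cexp_I_mul_mul_ofReal_le_one {z : ℂ} (hz : 0 ≤ z.im) {t : ℝ} (ht : 0 ≤ t) :
    ‖cexp (I * z * t)‖ ≤ 1 := by
  rw [norm_exp, Real.exp_le_one_iff]
  simpa [mul_re, mul_im] using mul_nonneg hz ht

theorem integrable_cexp_I_mul_mul_ofReal_mul (hr : ∀ y, 0 ≤ r y) (hrm : AEStronglyMeasurable r μ)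
    (hg : Integrable g μ) {z : ℂ} (hz : 0 ≤ z.im) :
    Integrable (fun y => cexp (I * z * r y) * g y) μ :=
  hg.bdd_mul (c := 1)
    (continuous_exp.comp_aestronglyMeasurable
      ((continuous_ofReal.comp_aestronglyMeasurable hrm).const_mul (I * z)))
    (.of_forall fun y => norm_cexp_I_mul_mul_ofReal_le_one hz (hr y))

theorem differentiableOn_integral_cexp_I_mul_mul_ofReal_mul (hr : ∀ y, 0 ≤ r y)
    (hrm : AEStronglyMeasurable r μ) (hg : Integrable g μ)
    (hrg : Integrable (fun y => (r y : ℂ) * g y) μ) :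
    DifferentiableOn ℂ (fun z => ∫ y, cexp (I * z * r y) * g y ∂μ) {z | 0 < z.im} := by
  intro z₀ hz₀
  have hs : {z : ℂ | 0 < z.im} ∈ nhds z₀ := (isOpen_lt continuous_const continuous_im).mem_nhds hz₀
  refine (hasDerivAt_integral_of_dominated_loc_of_deriv_le hs
    (F := fun z y => cexp (I * z * r y) * g y)
    (F' := fun z y => I * (cexp (I * z * r y) * (r y * g y))) (bound := fun y => ‖r y * g y‖)
    (Filter.eventually_of_mem hs fun z hz =>
      (integrable_cexp_I_mul_mul_ofReal_mul hr hrm hg (le_of_lt hz)).1)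
    (integrable_cexp_I_mul_mul_ofReal_mul hr hrm hg hz₀.le)
    ((integrable_cexp_I_mul_mul_ofReal_mul hr hrm hrg hz₀.le).1.const_mul I)
    (.of_forall fun y z hz => ?_) hrg.norm
    (.of_forall fun y z _ => ?_)).2.differentiableAt.differentiableWithinAt
  · rw [norm_mul, norm_I, one_mul, norm_mul]
    exact mul_le_of_le_one_left (norm_nonneg _)
      (norm_cexp_I_mul_mul_ofReal_le_one (le_of_lt hz) (hr y))
  · have := ((((hasDerivAt_id z).const_mul I).mul_const (r y : ℂ)).cexp).mul_const (g y)
    simp only [id, mul_one] at this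
    exact this.congr_deriv (by ring)

end UpperHalfPlane

theorem stmt17 (h : SchwartzMap (EuclideanSpace ℝ (Fin 3)) ℂ)
    (ξ : EuclideanSpace ℝ (Fin 3)) :
    (∀ z : ℂ, 0 < z.im → Integrable (fun y : EuclideanSpace ℝ (Fin 3) =>
        Complex.exp (Complex.I * z * (‖ξ - y‖ : ℂ)) * ((‖ξ - y‖ : ℝ) : ℂ)⁻¹ * h y)) ∧
    DifferentiableOn ℂ
      (fun z : ℂ => ∫ y : EuclideanSpace ℝ (Fin 3),
        Complex.exp (Complex.I * z * (‖ξ - y‖ : ℂ)) * ((‖ξ - y‖ : ℝ) : ℂ)⁻¹ * h y)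
      {z : ℂ | 0 < z.im} := by
  have hd : 1 < Module.finrank ℝ (EuclideanSpace ℝ (Fin 3)) := by simp
  have hr : AEStronglyMeasurable (fun y => ‖ξ - y‖) volume :=
    (continuous_const.sub continuous_id).norm.aestronglyMeasurable
  have hg : Integrable (fun y => ((‖ξ - y‖ : ℝ) : ℂ)⁻¹ * h y) := by
    simpa [Complex.real_smul] using
      integrable_inv_norm_sub_smul hd h.integrable (SchwartzMap.norm_le_seminorm ℂ h) ξ
  have hrg : Integrable (fun y => ((‖ξ - y‖ : ℝ) : ℂ) * (((‖ξ - y‖ : ℝ) : ℂ)⁻¹ * h y)) := by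
    refine h.integrable.norm.mono' ((continuous_ofReal.comp_aestronglyMeasurable hr).mul hg.1)
      (.of_forall fun y => ?_)
    rw [← mul_assoc, norm_mul, ← ofReal_inv, ← ofReal_mul, norm_real, Real.norm_of_nonneg
      (by positivity)]
    exact mul_le_of_le_one_left (norm_nonneg _) mul_inv_le_one
  refine ⟨fun z hz => ?_, ?_⟩
  · simpa only [mul_assoc] using
      integrable_cexp_I_mul_mul_ofReal_mul (fun y => norm_nonneg _) hr hg hz.le
  · simpa only [mul_assoc] using
      differentiableOn_integral_cexp_I_mul_mul_ofReal_mul (fun y => norm_nonneg _) hr hg hrg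
end
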